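/- Let μ₀ be a commutative multiplication on A whose associator satisfies A_{μ₀}(x,y,z) = A_{μ₀}(y,x,z) for all x,y,z (a commutative pre-Lie algebra). For bilinear maps φ,φ' on A set D(φ,φ')(x,y,z) = φ(x,φ'(y,z)) − φ(φ'(x,y),z). Let (φ_i)_{i≥0} be a pre-Lie formal deformation of μ₀, i.e. φ₀ = μ₀ and for every k ≥ 0 and all x,y,z ∈ A: ∑_{i+j=k} [D(φ_i,φ_j)(x,y,z) − D(φ_i,φ_j)(y,x,z)] = 0. Then the skew-symmetric part ψ₁ of φ₁ satisfies the Jacobi identity, and μ₀(x,φ₁(y,z)) − μ₀(y,φ₁(x,z)) + φ₁(x,μ₀(y,z)) − φ₁(y,μ₀(x,z)) = μ₀(z,ψ₁(x,y)) for all x,y,z ∈ A. -/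

import Mathlib

/-
Only the orders 1 and 2 of the deformation equation are needed. At order 2 the cyclic sum over
`x, y, z` of the equation is the Jacobiator of `ψ₁`, since the Jacobiator of the commutator of any
product is the alternating sum of its associators over `S₃`; the contributions of `φ₂`, which enter
only through `D(μ₀, φ₂)` and `D(φ₂, μ₀)`, cancel in this alternating sum because `μ₀` is
commutative. At order 1 the equation, rewritten with the commutativity of `μ₀`, is the second
identity.
-/

open Finset

/-- The associator of a bilinear multiplication. -/
def assocMap {K A : Type*} [Field K] [AddCommGroup A] [Module K A]
    (μ : A →ₗ[K] A →ₗ[K] A) (x y z : A) : A :=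
  μ x (μ y z) - μ (μ x y) z

/-- The skew-symmetric part of a bilinear multiplication. -/
def skewPart {K A : Type*} [Field K] [AddCommGroup A] [Module K A]
    (φ : A →ₗ[K] A →ₗ[K] A) (x y : A) : A :=
  φ x y - φ y x

/-- `D(φ,φ')(x,y,z) = φ(x,φ'(y,z)) − φ(φ'(x,y),z)`. -/
def defD {K A : Type*} [Field K] [AddCommGroup A] [Module K A]
    (φ φ' : A →ₗ[K] A →ₗ[K] A) (x y z : A) : A :=
  φ x (φ' y z) - φ (φ' x y) z

section PreLieDeformation

variable {K A : Type*} [Field K] [AddCommGroup A] [Module K A]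

def preLieDefect (φ φ' : A →ₗ[K] A →ₗ[K] A) (x y z : A) : A :=
  defD φ φ' x y z - defD φ φ' y x z

theorem jacobi_skewPart_eq_cyclic_sum_preLieDefect (φ : A →ₗ[K] A →ₗ[K] A) (x y z : A) :
    skewPart φ x (skewPart φ y z) + skewPart φ y (skewPart φ z x) + skewPart φ z (skewPart φ x y) =
      preLieDefect φ φ x y z + preLieDefect φ φ y z x + preLieDefect φ φ z x y := by
  simp only [skewPart, preLieDefect, defD, map_sub, LinearMap.sub_apply]
  abel

theorem cyclic_sum_preLieDefect_of_comm {μ : A →ₗ[K] A →ₗ[K] A} (hμ : ∀ x y, μ x y = μ y x)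
    (φ : A →ₗ[K] A →ₗ[K] A) (x y z : A) :
    (preLieDefect μ φ x y z + preLieDefect φ μ x y z) +
      (preLieDefect μ φ y z x + preLieDefect φ μ y z x) +
      (preLieDefect μ φ z x y + preLieDefect φ μ z x y) = 0 := by
  simp only [preLieDefect, defD]
  rw [hμ (φ x y), hμ (φ y x), hμ (φ y z), hμ (φ z y), hμ (φ z x), hμ (φ x z),
    hμ y z, hμ z x, hμ y x, hμ x z]
  abel

theorem preLieDefect_add_preLieDefect_of_comm {μ : A →ₗ[K] A →ₗ[K] A}
    (hμ : ∀ x y, μ x y = μ y x) (φ : A →ₗ[K] A →ₗ[K] A) (x y z : A) :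
    preLieDefect μ φ x y z + preLieDefect φ μ x y z =
      μ x (φ y z) - μ y (φ x z) + φ x (μ y z) - φ y (μ x z) - μ z (skewPart φ x y) := by
  simp only [preLieDefect, defD, skewPart, map_sub]
  rw [hμ (φ x y), hμ (φ y x), hμ y x]
  abel

end PreLieDeformation

theorem prelie_deformation_general {K A : Type*} [Field K]
    [AddCommGroup A] [Module K A]
    (μ₀ : A →ₗ[K] A →ₗ[K] A)
    (hcomm : ∀ x y : A, μ₀ x y = μ₀ y x)
    (φ : ℕ → (A →ₗ[K] A →ₗ[K] A))
    (h0 : φ 0 = μ₀)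
    (hdef : ∀ k : ℕ, ∀ x y z : A,
      ∑ p ∈ Finset.HasAntidiagonal.antidiagonal k,
        (defD (φ p.1) (φ p.2) x y z - defD (φ p.1) (φ p.2) y x z) = 0) :
    (∀ x y z : A,
      skewPart (φ 1) x (skewPart (φ 1) y z) + skewPart (φ 1) y (skewPart (φ 1) z x) +
        skewPart (φ 1) z (skewPart (φ 1) x y) = 0) ∧
    (∀ x y z : A,
      μ₀ x (φ 1 y z) - μ₀ y (φ 1 x z) + φ 1 x (μ₀ y z) - φ 1 y (μ₀ x z) =
        μ₀ z (skewPart (φ 1) x y)) := by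
  have equation (k : ℕ) (x y z : A) :
      ∑ p ∈ antidiagonal k, preLieDefect (φ p.1) (φ p.2) x y z = 0 :=
    hdef k x y z
  have order_one (x y z : A) : preLieDefect μ₀ (φ 1) x y z + preLieDefect (φ 1) μ₀ x y z = 0 := by
    simpa only [Nat.sum_antidiagonal_succ, Nat.antidiagonal_zero, sum_singleton, h0, zero_add]
      using equation 1 x y z
  have order_two (x y z : A) : preLieDefect μ₀ (φ 2) x y z + preLieDefect (φ 1) (φ 1) x y z +
      preLieDefect (φ 2) μ₀ x y z = 0 := by
    simpa only [Nat.sum_antidiagonal_succ, Nat.antidiagonal_zero, sum_singleton, h0, zero_add,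
      add_assoc] using equation 2 x y z
  refine ⟨fun x y z ↦ ?_, fun x y z ↦ ?_⟩
  · rw [jacobi_skewPart_eq_cyclic_sum_preLieDefect]
    linear_combination (norm := abel1) order_two x y z + order_two y z x + order_two z x y -
      cyclic_sum_preLieDefect_of_comm hcomm (φ 2) x y z
  · rw [← sub_eq_zero, ← preLieDefect_add_preLieDefect_of_comm hcomm]
    exact order_one x y z

/-- If `(φ_i)` is a pre-Lie formal deformation of a commutative pre-Lie multiplication
`μ₀`, then the skew-symmetric part `ψ₁` of `φ₁` satisfies the Jacobi identity, and
`μ₀(x,φ₁(y,z)) − μ₀(y,φ₁(x,z)) + φ₁(x,μ₀(y,z)) − φ₁(y,μ₀(x,z)) = μ₀(z,ψ₁(x,y))`. -/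
theorem prelie_deformation {K A : Type*} [Field K] [CharZero K]
    [AddCommGroup A] [Module K A]
    (μ₀ : A →ₗ[K] A →ₗ[K] A)
    (hcomm : ∀ x y : A, μ₀ x y = μ₀ y x)
    (hprelie : ∀ x y z : A, assocMap μ₀ x y z = assocMap μ₀ y x z)
    (φ : ℕ → (A →ₗ[K] A →ₗ[K] A))
    (h0 : φ 0 = μ₀)
    (hdef : ∀ k : ℕ, ∀ x y z : A,
      ∑ p ∈ Finset.HasAntidiagonal.antidiagonal k,
        (defD (φ p.1) (φ p.2) x y z - defD (φ p.1) (φ p.2) y x z) = 0) :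
    (∀ x y z : A,
      skewPart (φ 1) x (skewPart (φ 1) y z) + skewPart (φ 1) y (skewPart (φ 1) z x) +
        skewPart (φ 1) z (skewPart (φ 1) x y) = 0) ∧
    (∀ x y z : A,
      μ₀ x (φ 1 y z) - μ₀ y (φ 1 x z) + φ 1 x (μ₀ y z) - φ 1 y (μ₀ x z) =
        μ₀ z (skewPart (φ 1) x y)) :=
  prelie_deformation_general μ₀ hcomm φ h0 hdef
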